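/- Let θ be any parameter vector of the original network, let h ∈ {1,…,H_ℓ̂}, and let λ_0,…,λ_K ∈ ℝ satisfy Σ_{i=0}^K λ_i = 1. Then the empirical risk is preserved under the γ embedding: R̂_emp(γ_λ(θ)) = R_emp(θ). -/

import Mathlib

/-- Parameters of a fully connected feedforward network: `w ℓ j i` is the weight from
unit `i` of layer `ℓ-1` to unit `j` of layer `ℓ`, and `b ℓ j` is the bias of unit `j`
of layer `ℓ`.  Layers are numbered `1, …, L` (layer `0` is the input); units within a
layer are numbered from `0`, so layer `ℓ` consists of the units `0, …, H ℓ - 1`. -/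
structure NNParams where
  w : ℕ → ℕ → ℕ → ℝ
  b : ℕ → ℕ → ℝ

/-- `layerOut g H θ x ℓ i` : the output of unit `i` of layer `ℓ` on input `x`
(`layerOut g H θ x 0 = x`, and for `ℓ ≥ 1` it is `g` applied to the pre-activation). -/
noncomputable def layerOut (g : ℝ → ℝ) (H : ℕ → ℕ) (θ : NNParams) (x : ℕ → ℝ) :
    ℕ → ℕ → ℝ
  | 0, i => x i
  | ℓ + 1, i =>
      g (∑ j ∈ Finset.range (H ℓ), θ.w (ℓ + 1) i j * layerOut g H θ x ℓ j + θ.b (ℓ + 1) i)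

/-- Pre-activation `a_j^ℓ(x, θ)` of unit `j` of layer `ℓ ≥ 1`:
`a_j^ℓ = ∑_{i < H (ℓ-1)} w_{ji}^ℓ · (output of unit i of layer ℓ-1) + σ_j^ℓ`.
The outputs of the last layer `L` are `f_r(x,θ) = preact g H θ x L r` (linear output units). -/
noncomputable def preact (g : ℝ → ℝ) (H : ℕ → ℕ) (θ : NNParams) (x : ℕ → ℝ)
    (ℓ j : ℕ) : ℝ :=
  ∑ i ∈ Finset.range (H (ℓ - 1)), θ.w ℓ j i * layerOut g H θ x (ℓ - 1) i + θ.b ℓ j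

/-- Empirical risk `R_emp(θ) = (1/P) ∑_{p<P} ℒ(y^p, f(x^p, θ))`, where the network has
`L` layers with layer sizes given by `H`, the training inputs are `X p` and the labels
`Y p`, and `m` is the output dimension seen by the loss. -/
noncomputable def Remp (g : ℝ → ℝ) (H : ℕ → ℕ) (L P : ℕ) {m : ℕ}
    (X Y : ℕ → ℕ → ℝ) (loss : (ℕ → ℝ) → (Fin m → ℝ) → ℝ) (θ : NNParams) : ℝ :=
  (1 / (P : ℝ)) * ∑ p ∈ Finset.range P,
    loss (Y p) (fun r => preact g H θ (X p) L r)

/-- Layer sizes of the network enlarged by adding `K` new neurons to layer `l`. -/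
def enlargeH (H : ℕ → ℕ) (l K : ℕ) : ℕ → ℕ :=
  fun ℓ => if ℓ = l then H l + K else H ℓ

/-- The embedding `α_{ζv}` : copy all parameters, give the `k`-th new neuron of layer `l`
(`k = 0, …, K-1`, i.e. unit `H l + k`) the bias `ζ k` and incoming weights `v k`, and
set all weights from the new neurons to layer `l+1` to zero. -/
noncomputable def alphaEmb (H : ℕ → ℕ) (l K : ℕ) (ζ : ℕ → ℝ) (v : ℕ → ℕ → ℝ)
    (θ : NNParams) : NNParams where
  w := fun ℓ j i =>
    if ℓ = l ∧ H l ≤ j then v (j - H l) i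
    else if ℓ = l + 1 ∧ H l ≤ i then 0
    else θ.w ℓ j i
  b := fun ℓ j => if ℓ = l ∧ H l ≤ j then ζ (j - H l) else θ.b ℓ j

/-- The embedding `β_{ζs}` : copy all parameters except the biases of layer `l+1`, give
the `k`-th new neuron of layer `l` the bias `ζ k` and zero incoming weights, set the
outgoing weight from the `k`-th new neuron to unit `j` of layer `l+1` to `s j k`, and
replace the bias of unit `j` of layer `l+1` by `σ_j - ∑_{k<K} s j k · g (ζ k)`. -/
noncomputable def betaEmb (g : ℝ → ℝ) (H : ℕ → ℕ) (l K : ℕ) (ζ : ℕ → ℝ)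
    (s : ℕ → ℕ → ℝ) (θ : NNParams) : NNParams where
  w := fun ℓ j i =>
    if ℓ = l ∧ H l ≤ j then 0
    else if ℓ = l + 1 ∧ H l ≤ i then s j (i - H l)
    else θ.w ℓ j i
  b := fun ℓ j =>
    if ℓ = l ∧ H l ≤ j then ζ (j - H l)
    else if ℓ = l + 1 then θ.b (l + 1) j - ∑ k ∈ Finset.range K, s j k * g (ζ k)
    else θ.b ℓ j

/-- The embedding `γ_λ` : duplicate unit `h` of layer `l` into each of the `K` new
neurons (same bias and incoming weights as unit `h`), and split the outgoing weights:
unit `h` keeps `lam 0 · w_{jh}^{l+1}` and the `k`-th new neuron (`k = 0, …, K-1`,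
i.e. unit `H l + k`, corresponding to `λ_{k+1}` of the paper) gets
`lam (k+1) · w_{jh}^{l+1}`; all other parameters are copied. -/
noncomputable def gammaEmb (H : ℕ → ℕ) (l K : ℕ) (h : ℕ) (lam : ℕ → ℝ)
    (θ : NNParams) : NNParams where
  w := fun ℓ j i =>
    if ℓ = l ∧ H l ≤ j then θ.w l h i
    else if ℓ = l + 1 ∧ i = h then lam 0 * θ.w (l + 1) j h
    else if ℓ = l + 1 ∧ H l ≤ i then lam (i - H l + 1) * θ.w (l + 1) j h
    else θ.w ℓ j i
  b := fun ℓ j => if ℓ = l ∧ H l ≤ j then θ.b l h else θ.b ℓ j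

/-- `θ` with the single weight `w ℓ j i` replaced by `t`. -/
noncomputable def updW (θ : NNParams) (ℓ j i : ℕ) (t : ℝ) : NNParams :=
  ⟨fun ℓ' j' i' => if ℓ' = ℓ ∧ j' = j ∧ i' = i then t else θ.w ℓ' j' i', θ.b⟩

/-- `θ` with the single bias `b ℓ j` replaced by `t`. -/
noncomputable def updB (θ : NNParams) (ℓ j : ℕ) (t : ℝ) : NNParams :=
  ⟨θ.w, fun ℓ' j' => if ℓ' = ℓ ∧ j' = j then t else θ.b ℓ' j'⟩

/-- `∇ R_emp(θ) = 0` : every partial derivative of the empirical risk with respect to an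
actual network parameter (a weight `w ℓ j i` or a bias `b ℓ j`, `1 ≤ ℓ ≤ L`, `j < H ℓ`,
`i < H (ℓ-1)`) vanishes at `θ`. -/
def IsCritical (g : ℝ → ℝ) (H : ℕ → ℕ) (L P : ℕ) {m : ℕ}
    (X Y : ℕ → ℕ → ℝ) (loss : (ℕ → ℝ) → (Fin m → ℝ) → ℝ) (θ : NNParams) : Prop :=
  (∀ ℓ j i, 1 ≤ ℓ → ℓ ≤ L → j < H ℓ → i < H (ℓ - 1) →
      deriv (fun t => Remp g H L P X Y loss (updW θ ℓ j i t)) (θ.w ℓ j i) = 0) ∧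
  ∀ ℓ j, 1 ≤ ℓ → ℓ ≤ L → j < H ℓ →
      deriv (fun t => Remp g H L P X Y loss (updB θ ℓ j t)) (θ.b ℓ j) = 0

/-- Layer sizes after enlarging layer `p.1` by `p.2` neurons for each pair in the list. -/
def multiEnlargeH : (ℕ → ℕ) → List (ℕ × ℕ) → (ℕ → ℕ)
  | H, [] => H
  | H, (l, K) :: rest => multiEnlargeH (enlargeH H l K) rest

/-- Composition of `α` embeddings: for each `(l, K)` in the list (in order), add `K` new
neurons to layer `l` via `α` with biases `ζ l` and incoming weights `v l`. -/
noncomputable def multiAlpha (ζ : ℕ → ℕ → ℝ) (v : ℕ → ℕ → ℕ → ℝ) :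
    (ℕ → ℕ) → List (ℕ × ℕ) → NNParams → NNParams
  | _, [], θ => θ
  | H, (l, K) :: rest, θ =>
      multiAlpha ζ v (enlargeH H l K) rest (alphaEmb H l K (ζ l) (v l) θ)

noncomputable def multiBeta (g : ℝ → ℝ) (ζ : ℕ → ℕ → ℝ) (s : ℕ → ℕ → ℕ → ℝ) :
    (ℕ → ℕ) → List (ℕ × ℕ) → NNParams → NNParams
  | _, [], θ => θ
  | H, (l, K) :: rest, θ =>
      multiBeta g ζ s (enlargeH H l K) rest (betaEmb g H l K (ζ l) (s l) θ)

noncomputable def multiGamma (hsel : ℕ → ℕ) (lam : ℕ → ℕ → ℝ) :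
    (ℕ → ℕ) → List (ℕ × ℕ) → NNParams → NNParams
  | _, [], θ => θ
  | H, (l, K) :: rest, θ =>
      multiGamma hsel lam (enlargeH H l K) rest (gammaEmb H l K (hsel l) (lam l) θ)

/-- A single enlargement step: either a `β` embedding with zero outgoing weights, or a
`γ` embedding. -/
inductive EmbStep where
  | beta (l K : ℕ) (ζ : ℕ → ℝ)
  | gamma (l K : ℕ) (h : ℕ) (lam : ℕ → ℝ)

def EmbStep.layer : EmbStep → ℕ
  | .beta l _ _ => l
  | .gamma l _ _ _ => l

def EmbStep.count : EmbStep → ℕ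
  | .beta _ K _ => K
  | .gamma _ K _ _ => K

noncomputable def EmbStep.apply (g : ℝ → ℝ) (H : ℕ → ℕ) (θ : NNParams) : EmbStep → NNParams
  | .beta l K ζ => betaEmb g H l K ζ (fun _ _ => 0) θ
  | .gamma l K h lam => gammaEmb H l K h lam θ

def EmbStep.OK (H : ℕ → ℕ) (L : ℕ) : EmbStep → Prop
  | .beta l _ _ => 1 ≤ l ∧ l + 1 ≤ L
  | .gamma l K h lam => 1 ≤ l ∧ l + 1 ≤ L ∧ h < H l ∧ ∑ i ∈ Finset.range (K + 1), lam i = 1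

noncomputable def applySteps (g : ℝ → ℝ) : (ℕ → ℕ) → List EmbStep → NNParams → NNParams
  | _, [], θ => θ
  | H, st :: rest, θ =>
      applySteps g (enlargeH H st.layer st.count) rest (EmbStep.apply g H θ st)

def stepsH : (ℕ → ℕ) → List EmbStep → (ℕ → ℕ)
  | H, [] => H
  | H, st :: rest => stepsH (enlargeH H st.layer st.count) rest

/-!
Every new neuron has the incoming weights and bias of neuron `h`, so it outputs what `h`
outputs; inductively, each unit of the enlarged network outputs the value of the original unit
it copies. In layer `l + 1` the contributions of `h` and its `K` copies then add up to
`(λ_0 + ⋯ + λ_K) w_{jh} · out_h = w_{jh} · out_h`, so every pre-activation from layer `l + 1`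
on, in particular every network output, is unchanged.
-/

open Finset

/-- The unit of the original network that unit `j` of layer `ℓ` of `gammaEmb H l K h lam θ`
copies. -/
def gammaSrc (H : ℕ → ℕ) (l h ℓ j : ℕ) : ℕ := if ℓ = l ∧ H l ≤ j then h else j

section gammaEmb

variable {H : ℕ → ℕ} {l K h : ℕ} {lam : ℕ → ℝ} {θ : NNParams}

theorem gammaSrc_of_ne {ℓ : ℕ} (hℓ : ℓ ≠ l) (j : ℕ) : gammaSrc H l h ℓ j = j :=
  if_neg fun hj => hℓ hj.1

theorem gammaSrc_of_lt {j : ℕ} (hj : j < H l) (ℓ : ℕ) : gammaSrc H l h ℓ j = j :=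
  if_neg fun hj' => (Nat.not_le.mpr hj) hj'.2

theorem gammaSrc_add (k : ℕ) : gammaSrc H l h l (H l + k) = h :=
  if_pos ⟨rfl, Nat.le_add_right _ _⟩

theorem enlargeH_of_ne {ℓ : ℕ} (hℓ : ℓ ≠ l) : enlargeH H l K ℓ = H ℓ := if_neg hℓ

theorem enlargeH_self : enlargeH H l K l = H l + K := if_pos rfl

theorem gammaEmb_b (ℓ j : ℕ) :
    (gammaEmb H l K h lam θ).b ℓ j = θ.b ℓ (gammaSrc H l h ℓ j) := by
  unfold gammaEmb gammaSrc
  dsimp only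
  split_ifs with hj
  · rw [hj.1]
  · rfl

theorem gammaEmb_w_of_ne_succ {ℓ : ℕ} (hℓ : ℓ ≠ l + 1) (j i : ℕ) :
    (gammaEmb H l K h lam θ).w ℓ j i = θ.w ℓ (gammaSrc H l h ℓ j) i := by
  unfold gammaEmb gammaSrc
  split_ifs with hj <;> simp_all

theorem gammaEmb_w_succ_self (j : ℕ) :
    (gammaEmb H l K h lam θ).w (l + 1) j h = lam 0 * θ.w (l + 1) j h := by
  simp [gammaEmb]

theorem gammaEmb_w_succ_of_lt {i : ℕ} (hi : i < H l) (hih : i ≠ h) (j : ℕ) :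
    (gammaEmb H l K h lam θ).w (l + 1) j i = θ.w (l + 1) j i := by
  simp [gammaEmb, hih, Nat.not_le.mpr hi]

theorem gammaEmb_w_succ_add (hh : h < H l) (j k : ℕ) :
    (gammaEmb H l K h lam θ).w (l + 1) j (H l + k) = lam (k + 1) * θ.w (l + 1) j h := by
  simp [gammaEmb, show H l + k ≠ h by omega]

theorem sum_gammaEmb_w_succ_mul (hh : h < H l) (hlam : ∑ i ∈ range (K + 1), lam i = 1)
    (y : ℕ → ℝ) (j : ℕ) :
    ∑ i ∈ range (H l + K), (gammaEmb H l K h lam θ).w (l + 1) j i * y (gammaSrc H l h l i)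
      = ∑ i ∈ range (H l), θ.w (l + 1) j i * y i := by
  have hmem : h ∈ range (H l) := mem_range.mpr hh
  have hrest : ∑ i ∈ (range (H l)).erase h, (gammaEmb H l K h lam θ).w (l + 1) j i * y i
      = ∑ i ∈ (range (H l)).erase h, θ.w (l + 1) j i * y i := by
    refine sum_congr rfl fun i hi => ?_
    obtain ⟨hih, hi⟩ := mem_erase.mp hi
    rw [gammaEmb_w_succ_of_lt (mem_range.mp hi) hih]
  calc ∑ i ∈ range (H l + K), (gammaEmb H l K h lam θ).w (l + 1) j i * y (gammaSrc H l h l i)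
      = ∑ i ∈ range (H l), (gammaEmb H l K h lam θ).w (l + 1) j i * y i
          + ∑ k ∈ range K, lam (k + 1) * (θ.w (l + 1) j h * y h) := by
        rw [sum_range_add]
        congr 1
        · exact sum_congr rfl fun i hi => by rw [gammaSrc_of_lt (mem_range.mp hi)]
        · exact sum_congr rfl fun k _ => by rw [gammaSrc_add, gammaEmb_w_succ_add hh, mul_assoc]
    _ = (∑ i ∈ range (K + 1), lam i) * (θ.w (l + 1) j h * y h)
          + ∑ i ∈ (range (H l)).erase h, θ.w (l + 1) j i * y i := by
        rw [← add_sum_erase _ _ hmem, gammaEmb_w_succ_self, hrest, sum_range_succ', add_mul,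
          sum_mul]
        ring
    _ = ∑ i ∈ range (H l), θ.w (l + 1) j i * y i := by
        rw [hlam, one_mul]
        exact add_sum_erase _ (fun i => θ.w (l + 1) j i * y i) hmem

theorem gammaEmb_affine (hh : h < H l) (hlam : ∑ i ∈ range (K + 1), lam i = 1)
    (y : ℕ → ℝ) (ℓ j : ℕ) :
    ∑ i ∈ range (enlargeH H l K ℓ),
        (gammaEmb H l K h lam θ).w (ℓ + 1) j i * y (gammaSrc H l h ℓ i)
      + (gammaEmb H l K h lam θ).b (ℓ + 1) j
      = ∑ i ∈ range (H ℓ), θ.w (ℓ + 1) (gammaSrc H l h (ℓ + 1) j) i * y i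
        + θ.b (ℓ + 1) (gammaSrc H l h (ℓ + 1) j) := by
  rw [gammaEmb_b]
  congr 1
  by_cases hℓ : ℓ = l
  · subst hℓ
    rw [gammaSrc_of_ne (Nat.succ_ne_self ℓ), enlargeH_self, sum_gammaEmb_w_succ_mul hh hlam]
  · rw [enlargeH_of_ne hℓ]
    refine sum_congr rfl fun i _ => ?_
    rw [gammaEmb_w_of_ne_succ (by omega), gammaSrc_of_ne hℓ]

theorem layerOut_gammaEmb (g : ℝ → ℝ) (hl1 : 1 ≤ l) (hh : h < H l)
    (hlam : ∑ i ∈ range (K + 1), lam i = 1) (x : ℕ → ℝ) :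
    ∀ ℓ j, layerOut g (enlargeH H l K) (gammaEmb H l K h lam θ) x ℓ j
      = layerOut g H θ x ℓ (gammaSrc H l h ℓ j)
  | 0, j => by rw [gammaSrc_of_ne (by omega)]; rfl
  | ℓ + 1, j => by
    simp only [layerOut, layerOut_gammaEmb g hl1 hh hlam x ℓ]
    rw [gammaEmb_affine hh hlam]

theorem preact_gammaEmb (g : ℝ → ℝ) (hl1 : 1 ≤ l) (hh : h < H l)
    (hlam : ∑ i ∈ range (K + 1), lam i = 1) (x : ℕ → ℝ) (ℓ j : ℕ) :
    preact g (enlargeH H l K) (gammaEmb H l K h lam θ) x (ℓ + 1) j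
      = preact g H θ x (ℓ + 1) (gammaSrc H l h (ℓ + 1) j) := by
  simp only [preact, Nat.add_sub_cancel, layerOut_gammaEmb g hl1 hh hlam x ℓ]
  exact gammaEmb_affine hh hlam _ ℓ j

end gammaEmb

/-- For every parameter vector `θ`, every unit `h` of layer `l`
(`h < H l`) and coefficients `λ_0, …, λ_K` summing to one, the `γ` embedding preserves
the empirical risk: `R̂_emp(γ_λ(θ)) = R_emp(θ)`. -/
theorem gammaEmb_preserves_Remp
    (g : ℝ → ℝ) (H : ℕ → ℕ) (L P : ℕ) (X Y : ℕ → ℕ → ℝ)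
    (loss : (ℕ → ℝ) → (Fin (H L) → ℝ) → ℝ)
    (l : ℕ) (hl1 : 1 ≤ l) (hlL : l + 1 ≤ L) (K : ℕ)
    (h : ℕ) (hh : h < H l) (lam : ℕ → ℝ)
    (hlam : ∑ i ∈ Finset.range (K + 1), lam i = 1) (θ : NNParams) :
    Remp g (enlargeH H l K) L P X Y loss (gammaEmb H l K h lam θ)
      = Remp g H L P X Y loss θ := by
  obtain ⟨L, rfl⟩ : ∃ L', L = L' + 1 := ⟨L - 1, by omega⟩
  have houtput : ∀ x (r : ℕ), preact g (enlargeH H l K) (gammaEmb H l K h lam θ) x (L + 1) r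
      = preact g H θ x (L + 1) r := fun x r => by
    rw [preact_gammaEmb g hl1 hh hlam, gammaSrc_of_ne (by omega)]
  simp only [Remp, houtput]
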